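/- arXiv:1702.05443 — 4 statements merged into one kernel-verified Lean document; each statement's English description precedes it below -/
import Mathlib

section
/- Let C and Ĉ = C + Δ be n×n Hermitian complex matrices. Let u_j be a unit eigenvector of C with eigenvalue λ_j, let λ_i be another eigenvalue of C with λ_i ≠ λ_j, and let û_i be a unit eigenvector of Ĉ with eigenvalue λ̂_i. If sign(λ_i − λ_j)·2λ̂_i > sign(λ_i − λ_j)·(λ_i + λ_j), then |⟨û_i, u_j⟩| ≤ 2‖Δ u_j‖₂ / |λ_i − λ_j|. -/
/-!
Pairing the eigen-equation `Ĉ û = λ̂ û` with `u_j` and using `C u_j = λ_j u_j` gives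
`(λ̂ - λ_j) ⟨û, u_j⟩ = ⟨û, Δ u_j⟩`, so by Cauchy–Schwarz `|λ̂ - λ_j| |⟨û, u_j⟩| ≤ ‖Δ u_j‖`.
The sign condition says that `λ̂` lies on the far side of the midpoint of `λ_j` and `λ_i`,
hence `|λ̂ - λ_j| ≥ |λ_i - λ_j| / 2`.
-/

open Matrix Finset

theorem abs_sub_le_two_mul_abs_sub_of_sign_mul_lt {a b c : ℝ}
    (h : Real.sign (a - b) * (a + b) < Real.sign (a - b) * (2 * c)) :
    |a - b| ≤ 2 * |c - b| := by
  rcases lt_trichotomy a b with hab | rfl | hab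
  · rw [Real.sign_of_neg (sub_neg.2 hab)] at h
    rw [abs_of_neg (sub_neg.2 hab), abs_of_neg (by linarith : c - b < 0)]
    linarith
  · simp at h
  · rw [Real.sign_of_pos (sub_pos.2 hab)] at h
    rw [abs_of_pos (sub_pos.2 hab), abs_of_pos (by linarith : 0 < c - b)]
    linarith

namespace Matrix

variable {ι 𝕜 : Type*} [Fintype ι] [RCLike 𝕜]

theorem sum_norm_sq_eq_one_of_star_dotProduct_self_eq_one {w : ι → 𝕜}
    (hw : star w ⬝ᵥ w = 1) : ∑ a, ‖w a‖ ^ 2 = 1 := by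
  have h := congrArg RCLike.re hw
  simp only [dotProduct, Pi.star_apply, RCLike.star_def, RCLike.conj_mul, map_sum] at h
  simpa only [← RCLike.ofReal_pow, RCLike.ofReal_re, RCLike.one_re] using h

theorem norm_star_dotProduct_le (w x : ι → 𝕜) :
    ‖star w ⬝ᵥ x‖ ≤ √(∑ a, ‖w a‖ ^ 2) * √(∑ a, ‖x a‖ ^ 2) := by
  have h := norm_inner_le_norm (𝕜 := 𝕜) (WithLp.toLp 2 w) (WithLp.toLp 2 x)
  rwa [EuclideanSpace.inner_toLp_toLp, dotProduct_comm, EuclideanSpace.norm_eq,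
    EuclideanSpace.norm_eq] at h

theorem IsHermitian.star_dotProduct_mulVec_of_mulVec_eq_smul {A : Matrix ι ι 𝕜}
    (hA : A.IsHermitian) {w : ι → 𝕜} {μ : ℝ} (hw : A *ᵥ w = (μ : 𝕜) • w) (x : ι → 𝕜) :
    star w ⬝ᵥ (A *ᵥ x) = μ * (star w ⬝ᵥ x) := by
  rw [dotProduct_mulVec, ← hA.eq, ← star_mulVec, hw, star_smul, RCLike.star_def,
    RCLike.conj_ofReal, smul_dotProduct, smul_eq_mul]

theorem IsHermitian.sub_mul_star_dotProduct_eq_of_add {C Δ : Matrix ι ι 𝕜}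
    (hCΔ : (C + Δ).IsHermitian) {u w : ι → 𝕜} {lam mu : ℝ}
    (hu : C *ᵥ u = (lam : 𝕜) • u) (hw : (C + Δ) *ᵥ w = (mu : 𝕜) • w) :
    ((mu : 𝕜) - lam) * (star w ⬝ᵥ u) = star w ⬝ᵥ (Δ *ᵥ u) := by
  have h := hCΔ.star_dotProduct_mulVec_of_mulVec_eq_smul hw u
  rw [add_mulVec, dotProduct_add, hu, dotProduct_smul, smul_eq_mul] at h
  linear_combination -h

end Matrix

theorem eigvec_angle_refined_bound_general {n : ℕ}
    (C Δ Chat : Matrix (Fin n) (Fin n) ℂ)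
    (hChat : Chat.IsHermitian) (hsum : Chat = C + Δ)
    (uj uhati : Fin n → ℂ) (lamj lami lamhati : ℝ)
    (hCuj : C.mulVec uj = (lamj : ℂ) • uj)
    (hne : lami ≠ lamj)
    (huhati : star uhati ⬝ᵥ uhati = 1)
    (hCuhati : Chat.mulVec uhati = (lamhati : ℂ) • uhati)
    (hcond : Real.sign (lami - lamj) * (2 * lamhati)
      > Real.sign (lami - lamj) * (lami + lamj)) :
    ‖star uhati ⬝ᵥ uj‖
      ≤ 2 * Real.sqrt (∑ a, ‖Δ.mulVec uj a‖ ^ 2) / |lami - lamj| := by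
  subst hsum
  have hgap := abs_sub_le_two_mul_abs_sub_of_sign_mul_lt hcond
  have hcs := norm_star_dotProduct_le uhati (Δ *ᵥ uj)
  rw [sum_norm_sq_eq_one_of_star_dotProduct_self_eq_one huhati, Real.sqrt_one, one_mul,
    ← hChat.sub_mul_star_dotProduct_eq_of_add hCuj hCuhati, ← RCLike.ofReal_sub, norm_mul,
    RCLike.norm_ofReal] at hcs
  rw [le_div_iff₀ (abs_pos.2 (sub_ne_zero.2 hne))]
  nlinarith [norm_nonneg (star uhati ⬝ᵥ uj)]

/-- For Hermitian `C` and `Ĉ = C + Δ`, a unit eigenvector `u_j` of `C`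
with eigenvalue `λ_j`, another eigenvalue `λ_i ≠ λ_j` of `C`, and a unit eigenvector
`û_i` of `Ĉ` with eigenvalue `λ̂_i` satisfying
`sign(λ_i - λ_j) · 2 λ̂_i > sign(λ_i - λ_j) · (λ_i + λ_j)`, one has
`|⟨û_i, u_j⟩| ≤ 2 ‖Δ u_j‖₂ / |λ_i - λ_j|`. -/
theorem eigvec_angle_refined_bound {n : ℕ}
    (C Δ Chat : Matrix (Fin n) (Fin n) ℂ)
    (hC : C.IsHermitian) (hChat : Chat.IsHermitian) (hsum : Chat = C + Δ)
    (uj uhati : Fin n → ℂ) (lamj lami lamhati : ℝ)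
    (huj : star uj ⬝ᵥ uj = 1) (hCuj : C.mulVec uj = (lamj : ℂ) • uj)
    (v : Fin n → ℂ) (hv : v ≠ 0) (hCv : C.mulVec v = (lami : ℂ) • v)
    (hne : lami ≠ lamj)
    (huhati : star uhati ⬝ᵥ uhati = 1)
    (hCuhati : Chat.mulVec uhati = (lamhati : ℂ) • uhati)
    (hcond : Real.sign (lami - lamj) * (2 * lamhati)
      > Real.sign (lami - lamj) * (lami + lamj)) :
    ‖star uhati ⬝ᵥ uj‖
      ≤ 2 * Real.sqrt (∑ a, ‖Δ.mulVec uj a‖ ^ 2) / |lami - lamj| :=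
  eigvec_angle_refined_bound_general C Δ Chat hChat hsum uj uhati lamj lami lamhati hCuj hne huhati
    hCuhati hcond
end

section
/- Let x_1,…,x_m be i.i.d. random vectors in ℝ^n on a probability space, with mean zero, covariance matrix C = E[x x^T], and E[‖x‖₂⁴] < ∞. Let Ĉ = (1/m) Σ_{p=1}^m x_p x_p^T, let u_1,…,u_n be an orthonormal basis of eigenvectors of C with eigenvalues λ_1 ≥ … ≥ λ_n, and let ω ↦ (û_1(ω),…,û_n(ω)) be a measurable choice of an orthonormal basis of eigenvectors of Ĉ(ω) with eigenvalues λ̂_1(ω) ≥ … ≥ λ̂_n(ω). Fix i, j with λ_i ≠ λ_j, set k_j = (E[‖x x^T u_j‖₂²] − λ_j²)^{1/2}, and let E_{ij} be the event {sign(λ_i − λ_j)·2λ̂_i > sign(λ_i − λ_j)·(λ_i + λ_j)}. Then for every t > 0, P( E_{ij} ∩ {|⟨û_i, u_j⟩| ≥ t} ) ≤ (1/m)·(2 k_j / (t·|λ_i − λ_j|))². -/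
/-!
If `û` is a unit eigenvector of the symmetric matrix `Ĉ` with eigenvalue `λ̂`, then
`⟨û, Ĉ u_j - λ_j u_j⟩ = (λ̂ - λ_j) ⟨û, u_j⟩`, so by Cauchy–Schwarz
`(λ̂_i - λ_j)² ⟨û_i, u_j⟩² ≤ ‖Ĉ u_j - λ_j u_j‖²`. On `E_ij` the eigenvalue `λ̂_i` lies on the far
side of the midpoint `(λ_i + λ_j) / 2` from `λ_j`, so `4 (λ̂_i - λ_j)² > (λ_i - λ_j)²`, and the
event forces `‖Ĉ u_j - C u_j‖² ≥ t² (λ_i - λ_j)² / 4`. Now `Ĉ u_j` is the sample mean of the i.i.d.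
vectors `x_p x_pᵀ u_j`, whose mean is `C u_j`, hence `E ‖Ĉ u_j - C u_j‖² = k_j² / m`, and Markov's
inequality concludes.
-/

open Matrix Finset MeasureTheory ProbabilityTheory

section DotProduct

variable {κ : Type*} [Fintype κ]

lemma dotProduct_self_eq_sum_sq (v : κ → ℝ) : v ⬝ᵥ v = ∑ a, v a ^ 2 := by
  simp only [dotProduct, sq]

lemma sq_apply_le_dotProduct_self (v : κ → ℝ) (a : κ) : v a ^ 2 ≤ v ⬝ᵥ v := by
  rw [dotProduct_self_eq_sum_sq]
  exact single_le_sum (f := fun b => v b ^ 2) (fun b _ => sq_nonneg _) (mem_univ a)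

lemma sq_dotProduct_le (v w : κ → ℝ) : (v ⬝ᵥ w) ^ 2 ≤ (v ⬝ᵥ v) * (w ⬝ᵥ w) := by
  rw [dotProduct_self_eq_sum_sq, dotProduct_self_eq_sum_sq]
  exact sum_mul_sq_le_sq_mul_sq univ v w

lemma abs_mul_apply_le_dotProduct_self (v : κ → ℝ) (a b : κ) : |v a * v b| ≤ v ⬝ᵥ v := by
  refine abs_le_of_sq_le_sq ?_ (dotProduct_self_star_nonneg v)
  rw [mul_pow, sq (v ⬝ᵥ v)]
  exact mul_le_mul (sq_apply_le_dotProduct_self v a) (sq_apply_le_dotProduct_self v b)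
    (sq_nonneg _) (dotProduct_self_star_nonneg v)

lemma sq_vecMulVec_mulVec_apply_le (v w : κ → ℝ) (a : κ) :
    ((vecMulVec v v *ᵥ w) a) ^ 2 ≤ (v ⬝ᵥ v) ^ 2 * (w ⬝ᵥ w) := by
  have hv := dotProduct_self_star_nonneg v
  calc ((vecMulVec v v *ᵥ w) a) ^ 2 = v a ^ 2 * (v ⬝ᵥ w) ^ 2 := by
        simp [vecMulVec_mulVec, mul_pow]
    _ ≤ (v ⬝ᵥ v) * ((v ⬝ᵥ v) * (w ⬝ᵥ w)) :=
        mul_le_mul (sq_apply_le_dotProduct_self v a) (sq_dotProduct_le v w) (sq_nonneg _) hv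
    _ = (v ⬝ᵥ v) ^ 2 * (w ⬝ᵥ w) := by ring

end DotProduct

lemma sq_sub_lt_four_mul_sq_sub_of_sign {a b L : ℝ} (hab : a ≠ b)
    (h : Real.sign (a - b) * (2 * L) > Real.sign (a - b) * (a + b)) :
    (a - b) ^ 2 < 4 * (L - b) ^ 2 := by
  rcases (sub_ne_zero.2 hab).lt_or_gt with hneg | hpos
  · rw [Real.sign_of_neg hneg] at h
    nlinarith
  · rw [Real.sign_of_pos hpos] at h
    nlinarith

section EigenvectorPerturbation

variable {κ : Type*} [Fintype κ]

lemma sq_eigenvalue_sub_mul_dotProduct_le {A : Matrix κ κ ℝ} (hA : Aᵀ = A) {v : κ → ℝ} {L : ℝ}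
    (hv : v ⬝ᵥ v = 1) (hAv : A *ᵥ v = L • v) (l : ℝ) (w : κ → ℝ) :
    ((L - l) * (v ⬝ᵥ w)) ^ 2 ≤ (A *ᵥ w - l • w) ⬝ᵥ (A *ᵥ w - l • w) := by
  have key : v ⬝ᵥ (A *ᵥ w - l • w) = (L - l) * (v ⬝ᵥ w) := by
    rw [dotProduct_sub, dotProduct_mulVec, ← mulVec_transpose, hA, hAv, smul_dotProduct,
      dotProduct_smul, smul_eq_mul, smul_eq_mul, sub_mul]
  simpa [key, hv] using sq_dotProduct_le v (A *ᵥ w - l • w)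

lemma mul_sq_sub_div_four_le_of_sign {A : Matrix κ κ ℝ} (hA : Aᵀ = A) {v w : κ → ℝ}
    {L a b t : ℝ} (hv : v ⬝ᵥ v = 1) (hAv : A *ᵥ v = L • v) (hab : a ≠ b)
    (hsign : Real.sign (a - b) * (2 * L) > Real.sign (a - b) * (a + b)) (ht : 0 ≤ t)
    (hvw : t ≤ |v ⬝ᵥ w|) :
    t ^ 2 * (a - b) ^ 2 / 4 ≤ (A *ᵥ w - b • w) ⬝ᵥ (A *ᵥ w - b • w) := by
  have hgap := sq_sub_lt_four_mul_sq_sub_of_sign hab hsign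
  have hperturb := sq_eigenvalue_sub_mul_dotProduct_le hA hv hAv b w
  have ht2 : t ^ 2 ≤ (v ⬝ᵥ w) ^ 2 := by
    rw [← sq_abs (v ⬝ᵥ w)]
    exact pow_le_pow_left₀ ht hvw 2
  nlinarith

end EigenvectorPerturbation

section SampleMean

variable {Ω ι : Type*} [MeasurableSpace Ω] {μ : Measure Ω} [Fintype ι] [Nonempty ι]
  {Y : ι → Ω → ℝ} {Z : Ω → ℝ}

lemma variance_sampleMean (hindep : Pairwise fun p q => IndepFun (Y p) (Y q) μ)
    (hident : ∀ p, IdentDistrib (Y p) Z μ μ) (hZ : MemLp Z 2 μ) :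
    variance (fun ω => (Fintype.card ι : ℝ)⁻¹ * ∑ p, Y p ω) μ
      = (Fintype.card ι : ℝ)⁻¹ * variance Z μ := by
  have hY : ∀ p, MemLp (Y p) 2 μ := fun p => (hident p).memLp_iff.2 hZ
  have hsum : variance (fun ω => ∑ p, Y p ω) μ = Fintype.card ι * variance Z μ := by
    rw [← Finset.sum_fn, IndepFun.variance_sum (fun p _ => hY p) (fun p _ q _ hpq => hindep hpq)]
    simp [fun p => (hident p).variance_eq]
  have hcard : (Fintype.card ι : ℝ) ≠ 0 := Nat.cast_ne_zero.2 Fintype.card_ne_zero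
  rw [variance_const_mul, hsum]
  field_simp

lemma integral_sq_sampleMean_sub [IsProbabilityMeasure μ]
    (hindep : Pairwise fun p q => IndepFun (Y p) (Y q) μ)
    (hident : ∀ p, IdentDistrib (Y p) Z μ μ) (hZ : MemLp Z 2 μ) :
    ∫ ω, ((Fintype.card ι : ℝ)⁻¹ * ∑ p, Y p ω - ∫ ω, Z ω ∂μ) ^ 2 ∂μ
      = (Fintype.card ι : ℝ)⁻¹ * variance Z μ := by
  have hY : ∀ p, MemLp (Y p) 2 μ := fun p => (hident p).memLp_iff.2 hZ
  have hcard : (Fintype.card ι : ℝ) ≠ 0 := Nat.cast_ne_zero.2 Fintype.card_ne_zero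
  have hmean : ∫ ω, (Fintype.card ι : ℝ)⁻¹ * ∑ p, Y p ω ∂μ = ∫ ω, Z ω ∂μ := by
    rw [integral_const_mul, integral_finsetSum _ fun p _ => (hY p).integrable one_le_two]
    simp [fun p => (hident p).integral_eq, hcard]
  rw [← variance_sampleMean hindep hident hZ, variance_eq_integral, hmean]
  exact (memLp_finsetSum _ fun p _ => hY p).aemeasurable.const_mul _

end SampleMean

section SampleCovariance

variable {Ω ι κ : Type*} [Fintype ι]

noncomputable def sampleCovariance (x : ι → κ → ℝ) : Matrix κ κ ℝ :=
  (Fintype.card ι : ℝ)⁻¹ • ∑ p, vecMulVec (x p) (x p)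

lemma sampleCovariance_transpose (x : ι → κ → ℝ) :
    (sampleCovariance x)ᵀ = sampleCovariance x := by
  simp [sampleCovariance, transpose_sum, transpose_vecMulVec]

variable [Fintype κ]

lemma sampleCovariance_mulVec_apply (x : ι → κ → ℝ) (w : κ → ℝ) (a : κ) :
    (sampleCovariance x *ᵥ w) a
      = (Fintype.card ι : ℝ)⁻¹ * ∑ p, (vecMulVec (x p) (x p) *ᵥ w) a := by
  simp [sampleCovariance, smul_mulVec, sum_mulVec, Finset.sum_apply]

lemma continuous_vecMulVec_self_mulVec_apply (w : κ → ℝ) (a : κ) :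
    Continuous fun v : κ → ℝ => (vecMulVec v v *ᵥ w) a :=
  (continuous_apply a).comp ((continuous_id.matrix_vecMulVec continuous_id).matrix_mulVec
    continuous_const)

variable [MeasurableSpace Ω] {μ : Measure Ω} {x₀ : Ω → κ → ℝ}

lemma memLp_vecMulVec_mulVec_apply (hx₀ : Measurable x₀)
    (h4 : Integrable (fun ω => (x₀ ω ⬝ᵥ x₀ ω) ^ 2) μ) (w : κ → ℝ) (a : κ) :
    MemLp (fun ω => (vecMulVec (x₀ ω) (x₀ ω) *ᵥ w) a) 2 μ := by
  have hmeas := (continuous_vecMulVec_self_mulVec_apply w a).measurable.comp hx₀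
  refine (memLp_two_iff_integrable_sq hmeas.aestronglyMeasurable).2 ?_
  refine (h4.mul_const (w ⬝ᵥ w)).mono' (hmeas.pow_const 2).aestronglyMeasurable
    (ae_of_all _ fun ω => ?_)
  rw [Real.norm_of_nonneg (sq_nonneg _)]
  exact sq_vecMulVec_mulVec_apply_le _ w a

lemma integral_vecMulVec_mulVec_apply [IsFiniteMeasure μ] (hx₀ : Measurable x₀)
    (h4 : Integrable (fun ω => (x₀ ω ⬝ᵥ x₀ ω) ^ 2) μ) {C : Matrix κ κ ℝ}
    (hC : ∀ a b, C a b = ∫ ω, x₀ ω a * x₀ ω b ∂μ) (w : κ → ℝ) (a : κ) :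
    ∫ ω, (vecMulVec (x₀ ω) (x₀ ω) *ᵥ w) a ∂μ = (C *ᵥ w) a := by
  have hnorm : Integrable (fun ω => x₀ ω ⬝ᵥ x₀ ω) μ :=
    ((memLp_two_iff_integrable_sq (by fun_prop)).2 h4).integrable one_le_two
  have hint : ∀ b, Integrable (fun ω => x₀ ω a * x₀ ω b) μ := fun b =>
    hnorm.mono' (by fun_prop)
      (ae_of_all _ fun ω => abs_mul_apply_le_dotProduct_self (x₀ ω) a b)
  simp only [mulVec, dotProduct, vecMulVec_apply, hC]
  rw [integral_finsetSum _ fun b _ => (hint b).mul_const _]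
  simp [integral_mul_const]

variable {x : ι → Ω → κ → ℝ}

lemma memLp_sampleCovariance_mulVec_sub_apply [IsFiniteMeasure μ] (hx₀ : Measurable x₀)
    (hident : ∀ p, IdentDistrib (x p) x₀ μ μ) (h4 : Integrable (fun ω => (x₀ ω ⬝ᵥ x₀ ω) ^ 2) μ)
    (w v : κ → ℝ) (a : κ) :
    MemLp (fun ω => (sampleCovariance (fun p => x p ω) *ᵥ w - v) a) 2 μ := by
  have hg := (continuous_vecMulVec_self_mulVec_apply w a).measurable
  have hp : ∀ p, MemLp (fun ω => (vecMulVec (x p ω) (x p ω) *ᵥ w) a) 2 μ := fun p =>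
    ((hident p).comp hg).memLp_iff.2 (memLp_vecMulVec_mulVec_apply hx₀ h4 w a)
  simp only [Pi.sub_apply, sampleCovariance_mulVec_apply]
  exact ((memLp_finsetSum _ fun p _ => hp p).const_mul _).sub (memLp_const _)

lemma integrable_sampleCovariance_mulVec_sub [IsFiniteMeasure μ] (hx₀ : Measurable x₀)
    (hident : ∀ p, IdentDistrib (x p) x₀ μ μ) (h4 : Integrable (fun ω => (x₀ ω ⬝ᵥ x₀ ω) ^ 2) μ)
    (w v : κ → ℝ) :
    Integrable (fun ω => (sampleCovariance (fun p => x p ω) *ᵥ w - v) ⬝ᵥ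
      (sampleCovariance (fun p => x p ω) *ᵥ w - v)) μ := by
  simp only [dotProduct_self_eq_sum_sq]
  exact integrable_finsetSum _ fun a _ =>
    (memLp_sampleCovariance_mulVec_sub_apply hx₀ hident h4 w v a).integrable_sq

lemma integral_sampleCovariance_mulVec_sub [IsProbabilityMeasure μ] [Nonempty ι]
    (hx₀ : Measurable x₀) (hindep : iIndepFun x μ) (hident : ∀ p, IdentDistrib (x p) x₀ μ μ)
    (h4 : Integrable (fun ω => (x₀ ω ⬝ᵥ x₀ ω) ^ 2) μ) {C : Matrix κ κ ℝ}
    (hC : ∀ a b, C a b = ∫ ω, x₀ ω a * x₀ ω b ∂μ) (w : κ → ℝ) :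
    ∫ ω, (sampleCovariance (fun p => x p ω) *ᵥ w - C *ᵥ w) ⬝ᵥ
      (sampleCovariance (fun p => x p ω) *ᵥ w - C *ᵥ w) ∂μ
      = (Fintype.card ι : ℝ)⁻¹ * (∫ ω, (vecMulVec (x₀ ω) (x₀ ω) *ᵥ w) ⬝ᵥ
          (vecMulVec (x₀ ω) (x₀ ω) *ᵥ w) ∂μ - (C *ᵥ w) ⬝ᵥ (C *ᵥ w)) := by
  set g : κ → (κ → ℝ) → ℝ := fun a v => (vecMulVec v v *ᵥ w) a
  have hg : ∀ a, Measurable (g a) := fun a =>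
    (continuous_vecMulVec_self_mulVec_apply w a).measurable
  have hgx₀ : ∀ a, MemLp (fun ω => g a (x₀ ω)) 2 μ := memLp_vecMulVec_mulVec_apply hx₀ h4 w
  have hcoord : ∀ a, ∫ ω, ((sampleCovariance (fun p => x p ω) *ᵥ w - C *ᵥ w) a) ^ 2 ∂μ
      = (Fintype.card ι : ℝ)⁻¹ * variance (fun ω => g a (x₀ ω)) μ := fun a => by
    simp only [Pi.sub_apply, sampleCovariance_mulVec_apply,
      ← integral_vecMulVec_mulVec_apply hx₀ h4 hC w a]
    exact integral_sq_sampleMean_sub (fun p q hpq => (hindep.indepFun hpq).comp (hg a) (hg a))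
      (fun p => (hident p).comp (hg a)) (hgx₀ a)
  have hvar : ∀ a, variance (fun ω => g a (x₀ ω)) μ
      = ∫ ω, g a (x₀ ω) ^ 2 ∂μ - ((C *ᵥ w) a) ^ 2 := fun a => by
    rw [variance_eq_sub (hgx₀ a), integral_vecMulVec_mulVec_apply hx₀ h4 hC w a]
    rfl
  simp only [dotProduct_self_eq_sum_sq]
  rw [integral_finsetSum _ fun a _ =>
    (memLp_sampleCovariance_mulVec_sub_apply hx₀ hident h4 w _ a).integrable_sq]
  simp only [hcoord, hvar, ← mul_sum, sum_sub_distrib]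
  rw [integral_finsetSum _ fun a _ => (hgx₀ a).integrable_sq]

end SampleCovariance

theorem eigvec_angle_concentration_general {Ω : Type*} [MeasurableSpace Ω]
    (μ : Measure Ω) [IsProbabilityMeasure μ]
    {n m : ℕ} (hm : 0 < m)
    (x : Fin m → Ω → Fin n → ℝ)
    (hmeas : ∀ p, Measurable (x p))
    (hindep : iIndepFun x μ)
    (hident : ∀ p, IdentDistrib (x p) (x ⟨0, hm⟩) μ μ)
    (C : Matrix (Fin n) (Fin n) ℝ)
    (hC : ∀ a b, C a b = ∫ ω, x ⟨0, hm⟩ ω a * x ⟨0, hm⟩ ω b ∂μ)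
    (hL4 : Integrable (fun ω => (∑ a, x ⟨0, hm⟩ ω a ^ 2) ^ 2) μ)
    (Chat : Ω → Matrix (Fin n) (Fin n) ℝ)
    (hChat : ∀ ω, Chat ω = (m : ℝ)⁻¹ • ∑ p, vecMulVec (x p ω) (x p ω))
    (u : Fin n → Fin n → ℝ) (lam : Fin n → ℝ)
    (huortho : ∀ k l, ∑ a, u k a * u l a = if k = l then 1 else 0)
    (hueig : ∀ k, C.mulVec (u k) = lam k • u k)
    (uhat : Fin n → Ω → Fin n → ℝ) (lamhat : Fin n → Ω → ℝ)
    (huhatortho : ∀ ω k l, ∑ a, uhat k ω a * uhat l ω a = if k = l then 1 else 0)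
    (huhateig : ∀ ω k, (Chat ω).mulVec (uhat k ω) = lamhat k ω • uhat k ω)
    (i j : Fin n) (hij : lam i ≠ lam j)
    (kj : ℝ)
    (hkj : kj = Real.sqrt
      ((∫ ω, ∑ a, ((vecMulVec (x ⟨0, hm⟩ ω) (x ⟨0, hm⟩ ω)).mulVec (u j) a) ^ 2 ∂μ)
        - lam j ^ 2))
    (t : ℝ) (ht : 0 < t) :
    (μ {ω | Real.sign (lam i - lam j) * (2 * lamhat i ω)
              > Real.sign (lam i - lam j) * (lam i + lam j)
            ∧ t ≤ |∑ a, uhat i ω a * u j a|}).toReal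
      ≤ (m : ℝ)⁻¹ * (2 * kj / (t * |lam i - lam j|)) ^ 2 := by
  set x₀ := x ⟨0, hm⟩
  have : Nonempty (Fin m) := ⟨⟨0, hm⟩⟩
  obtain rfl : Chat = fun ω => sampleCovariance fun p => x p ω :=
    funext fun ω => by simp [hChat, sampleCovariance]
  have h4 : Integrable (fun ω => (x₀ ω ⬝ᵥ x₀ ω) ^ 2) μ := by
    simpa only [dotProduct_self_eq_sum_sq] using hL4
  simp only [← dotProduct_self_eq_sum_sq] at hkj
  set f := fun ω => (sampleCovariance (fun p => x p ω) *ᵥ u j - lam j • u j) ⬝ᵥ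
    (sampleCovariance (fun p => x p ω) *ᵥ u j - lam j • u j)
  set ε := t ^ 2 * (lam i - lam j) ^ 2 / 4
  have hf_integral : ∫ ω, f ω ∂μ = (m : ℝ)⁻¹ * kj ^ 2 := by
    have h := integral_sampleCovariance_mulVec_sub (hmeas _) hindep hident h4 hC (u j)
    have huj : u j ⬝ᵥ u j = 1 := (huortho j j).trans (if_pos rfl)
    rw [Fintype.card_fin, hueig, smul_dotProduct, dotProduct_smul, huj, smul_eq_mul, smul_eq_mul,
      mul_one, ← sq] at h
    have hf_nonneg : 0 ≤ ∫ ω, f ω ∂μ := integral_nonneg fun ω => dotProduct_self_star_nonneg _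
    rw [h] at hf_nonneg
    rw [hkj, Real.sq_sqrt (nonneg_of_mul_nonneg_right hf_nonneg (by positivity)), ← h]
  have hsub : {ω | Real.sign (lam i - lam j) * (2 * lamhat i ω)
        > Real.sign (lam i - lam j) * (lam i + lam j) ∧ t ≤ |∑ a, uhat i ω a * u j a|}
      ⊆ {ω | ε ≤ f ω} := fun ω ⟨hsign, hoverlap⟩ =>
    mul_sq_sub_div_four_le_of_sign (sampleCovariance_transpose _)
      ((huhatortho ω i i).trans (if_pos rfl)) (huhateig ω i) hij hsign ht.le hoverlap
  calc _ ≤ μ.real {ω | ε ≤ f ω} := measureReal_mono hsub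
    _ ≤ (∫ ω, f ω ∂μ) / ε := by
      rw [le_div_iff₀ (by positivity), mul_comm]
      exact mul_meas_ge_le_integral_of_nonneg (ae_of_all _ fun ω => dotProduct_self_star_nonneg _)
        (integrable_sampleCovariance_mulVec_sub (hmeas _) hident h4 _ _) _
    _ = _ := by
      rw [hf_integral, div_pow, mul_pow, mul_pow, sq_abs]
      simp only [ε]
      field_simp
      ring

/-- (Theorem 3 of the paper.) For i.i.d. mean-zero random vectors with
covariance `C` and finite fourth moment, sample covariance `Ĉ`, eigenpairs
`(u_j, λ_j)` of `C` (nonincreasing) and measurable eigenpairs `(û_i(ω), λ̂_i(ω))` of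
`Ĉ(ω)` (nonincreasing), for `λ_i ≠ λ_j`, `k_j = (E[‖x xᵀ u_j‖₂²] - λ_j²)^{1/2}` and
`t > 0`:
`P(E_{ij} ∩ {|⟨û_i, u_j⟩| ≥ t}) ≤ (1/m) (2 k_j / (t |λ_i - λ_j|))²`, where `E_{ij}` is
the event `sign(λ_i - λ_j) · 2 λ̂_i > sign(λ_i - λ_j) · (λ_i + λ_j)`. -/
theorem eigvec_angle_concentration {Ω : Type*} [MeasurableSpace Ω]
    (μ : Measure Ω) [IsProbabilityMeasure μ]
    {n m : ℕ} (hm : 0 < m)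
    (x : Fin m → Ω → Fin n → ℝ)
    (hmeas : ∀ p, Measurable (x p))
    (hindep : iIndepFun x μ)
    (hident : ∀ p, IdentDistrib (x p) (x ⟨0, hm⟩) μ μ)
    (hmean : ∀ a, ∫ ω, x ⟨0, hm⟩ ω a ∂μ = 0)
    (C : Matrix (Fin n) (Fin n) ℝ)
    (hC : ∀ a b, C a b = ∫ ω, x ⟨0, hm⟩ ω a * x ⟨0, hm⟩ ω b ∂μ)
    (hL4 : Integrable (fun ω => (∑ a, x ⟨0, hm⟩ ω a ^ 2) ^ 2) μ)
    (Chat : Ω → Matrix (Fin n) (Fin n) ℝ)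
    (hChat : ∀ ω, Chat ω = (m : ℝ)⁻¹ • ∑ p, vecMulVec (x p ω) (x p ω))
    (u : Fin n → Fin n → ℝ) (lam : Fin n → ℝ) (hlam : Antitone lam)
    (huortho : ∀ k l, ∑ a, u k a * u l a = if k = l then 1 else 0)
    (hueig : ∀ k, C.mulVec (u k) = lam k • u k)
    (uhat : Fin n → Ω → Fin n → ℝ) (lamhat : Fin n → Ω → ℝ)
    (huhatmeas : ∀ k, Measurable (uhat k))
    (hlamhatmeas : ∀ k, Measurable (lamhat k))
    (huhatortho : ∀ ω k l, ∑ a, uhat k ω a * uhat l ω a = if k = l then 1 else 0)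
    (huhateig : ∀ ω k, (Chat ω).mulVec (uhat k ω) = lamhat k ω • uhat k ω)
    (hlamhatmono : ∀ ω, Antitone (fun k => lamhat k ω))
    (i j : Fin n) (hij : lam i ≠ lam j)
    (kj : ℝ)
    (hkj : kj = Real.sqrt
      ((∫ ω, ∑ a, ((vecMulVec (x ⟨0, hm⟩ ω) (x ⟨0, hm⟩ ω)).mulVec (u j) a) ^ 2 ∂μ)
        - lam j ^ 2))
    (t : ℝ) (ht : 0 < t) :
    (μ {ω | Real.sign (lam i - lam j) * (2 * lamhat i ω)
              > Real.sign (lam i - lam j) * (lam i + lam j)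
            ∧ t ≤ |∑ a, uhat i ω a * u j a|}).toReal
      ≤ (m : ℝ)⁻¹ * (2 * kj / (t * |lam i - lam j|)) ^ 2 :=
  eigvec_angle_concentration_general μ hm x hmeas hindep hident C hC hL4 Chat hChat u lam huortho
    hueig uhat lamhat huhatortho huhateig i j hij kj hkj t ht
end

section
/- Let x_1,…,x_m be i.i.d. random vectors in ℝ^n on a probability space, with mean zero, covariance matrix C = E[x x^T], and E[‖x‖₂⁴] < ∞. Let Ĉ = (1/m) Σ_{p=1}^m x_p x_p^T, let u_1,…,u_n be an orthonormal basis of eigenvectors of C with eigenvalues λ_1 ≥ … ≥ λ_n, and let ω ↦ (û_1(ω),…,û_n(ω)) be a measurable choice of an orthonormal basis of eigenvectors of Ĉ(ω) with eigenvalues λ̂_1(ω) ≥ … ≥ λ̂_n(ω). Let w_{ij} ≥ 0 (for i ≠ j) be nonnegative weights such that w_{ij} = 0 whenever λ_i = λ_j, set k_j = (E[‖x x^T u_j‖₂²] − λ_j²)^{1/2}, and let E be the event that sign(λ_i − λ_j)·2λ̂_i > sign(λ_i − λ_j)·(λ_i + λ_j) for every pair (i,j) with w_{ij} ≠ 0.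 Then for every t > 0, P( E ∩ {Σ_{i≠j} w_{ij} ⟨û_i, u_j⟩² > t} ) ≤ Σ_{i≠j} 4 w_{ij} k_j² / (m·t·(λ_i − λ_j)²). -/
/-!
Pairing the eigen-equation of `û_i` with `u_j` and using the symmetry of `Ĉ` gives
`(λ̂_i - λ_j) ⟨û_i, u_j⟩ = ⟨û_i, (Ĉ - λ_j) u_j⟩`, so by Cauchy–Schwarz
`(λ̂_i - λ_j)² ⟨û_i, u_j⟩² ≤ ‖(Ĉ - λ_j) u_j‖²`. On the event `E` the sign condition says that
`2 (λ̂_i - λ_j) = (2 λ̂_i - λ_i - λ_j) + (λ_i - λ_j)` is a sum of two terms of the same sign, hence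
`(λ_i - λ_j)² < 4 (λ̂_i - λ_j)²`. The weighted sum is therefore dominated on `E` by
`g = ∑ 4 w_ij ‖(Ĉ - λ_j) u_j‖² / (λ_i - λ_j)²`. Since `(Ĉ - λ_j) u_j` is the centred sample mean
of the i.i.d. vectors `x_p x_pᵀ u_j` with mean `C u_j = λ_j u_j`, its expected squared norm is
`k_j² / m`, and Markov's inequality for `g` concludes.
-/

open Matrix Finset MeasureTheory ProbabilityTheory

section

variable {Ω ι : Type*} [MeasurableSpace Ω] {μ : Measure Ω} [Fintype ι]

theorem Matrix.vecMulVec_mulVec_self_apply (ξ v : ι → ℝ) (a : ι) :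
    (vecMulVec ξ ξ *ᵥ v) a = ∑ b, ξ a * ξ b * v b := by
  simp [mulVec, dotProduct, vecMulVec, mul_assoc]

theorem Matrix.sq_vecMulVec_mulVec_self_apply_le (ξ v : ι → ℝ) (a : ι) :
    (vecMulVec ξ ξ *ᵥ v) a ^ 2 ≤ (∑ b, v b ^ 2) * (∑ b, ξ b ^ 2) ^ 2 := by
  have hcs : (∑ b, ξ b * v b) ^ 2 ≤ (∑ b, ξ b ^ 2) * ∑ b, v b ^ 2 :=
    Finset.sum_mul_sq_le_sq_mul_sq _ _ _
  have hcoord : ξ a ^ 2 ≤ ∑ b, ξ b ^ 2 :=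
    Finset.single_le_sum (f := fun b => ξ b ^ 2) (fun b _ => sq_nonneg _) (mem_univ a)
  have hform : (vecMulVec ξ ξ *ᵥ v) a ^ 2 = (∑ b, ξ b * v b) ^ 2 * ξ a ^ 2 := by
    simp only [vecMulVec_mulVec_self_apply, mul_assoc, ← Finset.mul_sum]; ring
  rw [hform]
  calc (∑ b, ξ b * v b) ^ 2 * ξ a ^ 2 ≤ ((∑ b, ξ b ^ 2) * ∑ b, v b ^ 2) * ∑ b, ξ b ^ 2 :=
        mul_le_mul hcs hcoord (sq_nonneg _) (by positivity)
    _ = _ := by ring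

theorem Matrix.sq_mul_dotProduct_le_of_mulVec_eq_smul {A : Matrix ι ι ℝ} (hA : Aᵀ = A)
    {e : ι → ℝ} {c : ℝ} (he : e ⬝ᵥ e = 1) (heig : A *ᵥ e = c • e) (v : ι → ℝ) (b : ℝ) :
    ((c - b) * (e ⬝ᵥ v)) ^ 2 ≤ ∑ i, (A *ᵥ v - b • v) i ^ 2 := by
  have hshift : (c - b) * (e ⬝ᵥ v) = e ⬝ᵥ (A *ᵥ v - b • v) := by
    rw [dotProduct_sub, dotProduct_smul, dotProduct_mulVec, ← mulVec_transpose, hA, heig,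
      smul_dotProduct, smul_eq_mul, smul_eq_mul]
    ring
  have hcs := Finset.sum_mul_sq_le_sq_mul_sq univ e (A *ᵥ v - b • v)
  have he' : ∑ i, e i ^ 2 = 1 := by simp only [sq]; exact he
  rwa [he', one_mul, ← dotProduct, ← hshift] at hcs

theorem sq_sub_lt_four_mul_sq_sub_of_sign_mul_lt {a b c : ℝ} (hab : a ≠ b)
    (h : Real.sign (a - b) * (a + b) < Real.sign (a - b) * (2 * c)) :
    (a - b) ^ 2 < 4 * (c - b) ^ 2 := by
  rcases (sub_ne_zero.mpr hab).lt_or_gt with hneg | hpos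
  · rw [Real.sign_of_neg hneg] at h
    nlinarith
  · rw [Real.sign_of_pos hpos] at h
    nlinarith

theorem Matrix.mul_sq_dotProduct_le_of_sign_mul_lt {A : Matrix ι ι ℝ} (hA : Aᵀ = A)
    {e : ι → ℝ} {c : ℝ} (he : e ⬝ᵥ e = 1) (heig : A *ᵥ e = c • e) (v : ι → ℝ)
    {a b w : ℝ} (hw : 0 ≤ w) (hwab : a = b → w = 0)
    (hgap : w ≠ 0 → Real.sign (a - b) * (a + b) < Real.sign (a - b) * (2 * c)) :
    w * (e ⬝ᵥ v) ^ 2 ≤ 4 * w / (a - b) ^ 2 * ∑ i, (A *ᵥ v - b • v) i ^ 2 := by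
  rcases eq_or_ne w 0 with rfl | hw0
  · simp
  have hab : a ≠ b := mt hwab hw0
  have hgap' := sq_sub_lt_four_mul_sq_sub_of_sign_mul_lt hab (hgap hw0)
  have hpert := sq_mul_dotProduct_le_of_mulVec_eq_smul hA he heig v b
  rw [div_mul_eq_mul_div, le_div_iff₀ (by positivity [sub_ne_zero.mpr hab])]
  calc w * (e ⬝ᵥ v) ^ 2 * (a - b) ^ 2 ≤ w * (e ⬝ᵥ v) ^ 2 * (4 * (c - b) ^ 2) := by
        gcongr
    _ = 4 * w * ((c - b) * (e ⬝ᵥ v)) ^ 2 := by ring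
    _ ≤ 4 * w * ∑ i, (A *ᵥ v - b • v) i ^ 2 := by gcongr

theorem variance_sampleMean_s8 {m : ℕ} {X : Fin m → Ω → ℝ} (p₀ : Fin m) (hX : MemLp (X p₀) 2 μ)
    (hindep : iIndepFun X μ) (hident : ∀ p, IdentDistrib (X p) (X p₀) μ μ) :
    Var[fun ω => (m : ℝ)⁻¹ * ∑ p, X p ω; μ] = (m : ℝ)⁻¹ * Var[X p₀; μ] := by
  have hm : (m : ℝ) ≠ 0 := Nat.cast_ne_zero.mpr (Fin.pos p₀).ne'
  have hsum : Var[∑ p, X p; μ] = ∑ p, Var[X p; μ] :=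
    IndepFun.variance_sum (fun p _ => (hident p).memLp_iff.mpr hX)
      fun p _ q _ hpq => hindep.indepFun hpq
  rw [variance_const_mul, ← Finset.sum_fn, hsum,
    Finset.sum_congr rfl fun p _ => (hident p).variance_eq]
  simp only [sum_const, card_univ, Fintype.card_fin, nsmul_eq_mul]
  field_simp

theorem integral_sampleMean {m : ℕ} {X : Fin m → Ω → ℝ} (p₀ : Fin m) (hX : Integrable (X p₀) μ)
    (hident : ∀ p, IdentDistrib (X p) (X p₀) μ μ) :
    μ[fun ω => (m : ℝ)⁻¹ * ∑ p, X p ω] = μ[X p₀] := by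
  have hm : (m : ℝ) ≠ 0 := Nat.cast_ne_zero.mpr (Fin.pos p₀).ne'
  rw [integral_const_mul, integral_finsetSum _ fun p _ => (hident p).integrable_iff.mpr hX,
    Finset.sum_congr rfl fun p _ => (hident p).integral_eq]
  simp only [sum_const, card_univ, Fintype.card_fin, nsmul_eq_mul]
  field_simp

theorem integral_sum_sq_sampleMean_sub [IsFiniteMeasure μ] {m : ℕ} {Y : Fin m → Ω → ι → ℝ}
    (p₀ : Fin m) (hY : ∀ a, MemLp (fun ω => Y p₀ ω a) 2 μ) (hindep : iIndepFun Y μ)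
    (hident : ∀ p, IdentDistrib (Y p) (Y p₀) μ μ) {c : ι → ℝ}
    (hc : ∀ a, ∫ ω, Y p₀ ω a ∂μ = c a) :
    Integrable (fun ω => ∑ a, ((m : ℝ)⁻¹ • ∑ p, Y p ω - c) a ^ 2) μ ∧
      ∫ ω, ∑ a, ((m : ℝ)⁻¹ • ∑ p, Y p ω - c) a ^ 2 ∂μ
        = (m : ℝ)⁻¹ * ∑ a, Var[fun ω => Y p₀ ω a; μ] := by
  have coord : ∀ a, Integrable (fun ω => ((m : ℝ)⁻¹ • ∑ p, Y p ω - c) a ^ 2) μ ∧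
      ∫ ω, ((m : ℝ)⁻¹ • ∑ p, Y p ω - c) a ^ 2 ∂μ = (m : ℝ)⁻¹ * Var[fun ω => Y p₀ ω a; μ] := by
    intro a
    have hidenta : ∀ p, IdentDistrib (fun ω => Y p ω a) (fun ω => Y p₀ ω a) μ μ :=
      fun p => (hident p).comp (measurable_pi_apply a)
    have hmean : MemLp (fun ω => (m : ℝ)⁻¹ * ∑ p, Y p ω a) 2 μ :=
      (memLp_finsetSum _ fun p _ => (hidenta p).memLp_iff.mpr (hY a)).const_mul _
    have hE := integral_sampleMean p₀ ((hY a).integrable one_le_two) hidenta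
    have hpt : (fun ω => ((m : ℝ)⁻¹ • ∑ p, Y p ω - c) a ^ 2)
        = fun ω => ((m : ℝ)⁻¹ * ∑ p, Y p ω a - c a) ^ 2 := by
      ext ω; simp [Finset.sum_apply]
    rw [hpt, ← variance_sampleMean_s8 (X := fun p ω => Y p ω a) p₀ (hY a)
      (hindep.comp _ fun _ => measurable_pi_apply a) hidenta,
      variance_eq_integral hmean.aemeasurable, hE, hc]
    exact ⟨(hmean.sub (memLp_const _)).integrable_sq, rfl⟩
  refine ⟨integrable_finsetSum _ fun a _ => (coord a).1, ?_⟩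
  rw [integral_finsetSum _ fun a _ => (coord a).1, Finset.mul_sum]
  exact Finset.sum_congr rfl fun a _ => (coord a).2

theorem sum_variance_apply_eq [IsProbabilityMeasure μ] {Z : Ω → ι → ℝ}
    (hZ : ∀ a, MemLp (fun ω => Z ω a) 2 μ) :
    ∑ a, Var[fun ω => Z ω a; μ] = ∫ ω, ∑ a, Z ω a ^ 2 ∂μ - ∑ a, (∫ ω, Z ω a ∂μ) ^ 2 := by
  simp only [variance_eq_sub (hZ _)]
  rw [integral_finsetSum _ fun a _ => (hZ a).integrable_sq, sum_sub_distrib]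
  rfl

theorem memLp_two_apply_of_integrable_sq_sum_sq [IsFiniteMeasure μ] {X : Ω → ι → ℝ}
    (hX : AEMeasurable X μ) (hL4 : Integrable (fun ω => (∑ a, X ω a ^ 2) ^ 2) μ) (a : ι) :
    MemLp (fun ω => X ω a) 2 μ := by
  have hcoord : ∀ b, AEMeasurable (fun ω => X ω b) μ :=
    fun b => (measurable_pi_apply b).comp_aemeasurable hX
  have hnorm : Integrable (fun ω => ∑ b, X ω b ^ 2) μ :=
    ((memLp_two_iff_integrable_sq (by fun_prop)).mpr hL4).integrable one_le_two
  refine (memLp_two_iff_integrable_sq (hcoord a).aestronglyMeasurable).mpr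
    (hnorm.mono' (by fun_prop) (ae_of_all _ fun ω => ?_))
  rw [Real.norm_of_nonneg (sq_nonneg _)]
  exact Finset.single_le_sum (f := fun b => X ω b ^ 2) (fun b _ => sq_nonneg _) (mem_univ a)

theorem memLp_two_vecMulVec_mulVec_apply_of_integrable_sq_sum_sq {X : Ω → ι → ℝ}
    (hX : AEMeasurable X μ) (hL4 : Integrable (fun ω => (∑ a, X ω a ^ 2) ^ 2) μ)
    (v : ι → ℝ) (a : ι) :
    MemLp (fun ω => (vecMulVec (X ω) (X ω) *ᵥ v) a) 2 μ := by
  have hmeas : AEStronglyMeasurable (fun ω => (vecMulVec (X ω) (X ω) *ᵥ v) a) μ := by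
    simp only [vecMulVec_mulVec_self_apply]
    have hcoord : ∀ b, AEMeasurable (fun ω => X ω b) μ :=
      fun b => (measurable_pi_apply b).comp_aemeasurable hX
    fun_prop
  refine (memLp_two_iff_integrable_sq hmeas).mpr
    ((hL4.const_mul (∑ b, v b ^ 2)).mono' (by fun_prop) (ae_of_all _ fun ω => ?_))
  rw [Real.norm_of_nonneg (sq_nonneg _)]
  exact sq_vecMulVec_mulVec_self_apply_le _ _ _

theorem integral_vecMulVec_mulVec_apply_s8 {X : Ω → ι → ℝ} (hX : ∀ a, MemLp (fun ω => X ω a) 2 μ)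
    {C : Matrix ι ι ℝ} (hC : ∀ a b, C a b = ∫ ω, X ω a * X ω b ∂μ) (v : ι → ℝ) (a : ι) :
    ∫ ω, (vecMulVec (X ω) (X ω) *ᵥ v) a ∂μ = (C *ᵥ v) a := by
  simp_rw [vecMulVec_mulVec_self_apply]
  simp only [mulVec, dotProduct, hC]
  rw [integral_finsetSum (f := fun b ω => X ω a * X ω b * v b) _
    fun b _ => ((hX a).integrable_mul (hX b)).mul_const _]
  simp only [integral_mul_const]

theorem sum_variance_vecMulVec_mulVec_apply [IsProbabilityMeasure μ] {X : Ω → ι → ℝ}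
    (hX : AEMeasurable X μ) (hL4 : Integrable (fun ω => (∑ a, X ω a ^ 2) ^ 2) μ)
    {C : Matrix ι ι ℝ} (hC : ∀ a b, C a b = ∫ ω, X ω a * X ω b ∂μ) {v : ι → ℝ} {l : ℝ}
    (hv : C *ᵥ v = l • v) (hv1 : ∑ a, v a ^ 2 = 1) :
    ∑ a, Var[fun ω => (vecMulVec (X ω) (X ω) *ᵥ v) a; μ]
      = ∫ ω, ∑ a, (vecMulVec (X ω) (X ω) *ᵥ v) a ^ 2 ∂μ - l ^ 2 := by
  rw [sum_variance_apply_eq (memLp_two_vecMulVec_mulVec_apply_of_integrable_sq_sum_sq hX hL4 v)]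
  simp only [integral_vecMulVec_mulVec_apply_s8 (memLp_two_apply_of_integrable_sq_sum_sq hX hL4) hC,
    hv, Pi.smul_apply, smul_eq_mul, mul_pow, ← mul_sum, hv1, mul_one]

theorem integral_sum_sq_sampleCov_mulVec_sub [IsFiniteMeasure μ] {m : ℕ} (p₀ : Fin m)
    {x : Fin m → Ω → ι → ℝ} (hmeas : ∀ p, Measurable (x p)) (hindep : iIndepFun x μ)
    (hident : ∀ p, IdentDistrib (x p) (x p₀) μ μ)
    (hL4 : Integrable (fun ω => (∑ a, x p₀ ω a ^ 2) ^ 2) μ) {C : Matrix ι ι ℝ}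
    (hC : ∀ a b, C a b = ∫ ω, x p₀ ω a * x p₀ ω b ∂μ) (v : ι → ℝ) :
    Integrable (fun ω => ∑ a,
        (((m : ℝ)⁻¹ • ∑ p, vecMulVec (x p ω) (x p ω)) *ᵥ v - C *ᵥ v) a ^ 2) μ ∧
      ∫ ω, ∑ a, (((m : ℝ)⁻¹ • ∑ p, vecMulVec (x p ω) (x p ω)) *ᵥ v - C *ᵥ v) a ^ 2 ∂μ
        = (m : ℝ)⁻¹ * ∑ a, Var[fun ω => (vecMulVec (x p₀ ω) (x p₀ ω) *ᵥ v) a; μ] := by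
  have hf : Measurable fun ξ : ι → ℝ => vecMulVec ξ ξ *ᵥ v := by
    refine measurable_pi_lambda _ fun a => ?_
    simp only [vecMulVec_mulVec_self_apply]
    fun_prop
  simp only [smul_mulVec, sum_mulVec]
  exact integral_sum_sq_sampleMean_sub p₀
    (memLp_two_vecMulVec_mulVec_apply_of_integrable_sq_sum_sq (hmeas p₀).aemeasurable hL4 v)
    (hindep.comp _ fun _ => hf) (fun p => (hident p).comp hf)
    (integral_vecMulVec_mulVec_apply_s8
      (memLp_two_apply_of_integrable_sq_sum_sq (hmeas p₀).aemeasurable hL4) hC v)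

end

theorem weighted_angle_sum_concentration_general {Ω : Type*} [MeasurableSpace Ω]
    (μ : Measure Ω) [IsProbabilityMeasure μ]
    {n m : ℕ} (hm : 0 < m)
    (x : Fin m → Ω → Fin n → ℝ)
    (hmeas : ∀ p, Measurable (x p))
    (hindep : iIndepFun x μ)
    (hident : ∀ p, IdentDistrib (x p) (x ⟨0, hm⟩) μ μ)
    (C : Matrix (Fin n) (Fin n) ℝ)
    (hC : ∀ a b, C a b = ∫ ω, x ⟨0, hm⟩ ω a * x ⟨0, hm⟩ ω b ∂μ)
    (hL4 : Integrable (fun ω => (∑ a, x ⟨0, hm⟩ ω a ^ 2) ^ 2) μ)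
    (Chat : Ω → Matrix (Fin n) (Fin n) ℝ)
    (hChat : ∀ ω, Chat ω = (m : ℝ)⁻¹ • ∑ p, vecMulVec (x p ω) (x p ω))
    (u : Fin n → Fin n → ℝ) (lam : Fin n → ℝ)
    (huortho : ∀ k l, ∑ a, u k a * u l a = if k = l then 1 else 0)
    (hueig : ∀ k, C.mulVec (u k) = lam k • u k)
    (uhat : Fin n → Ω → Fin n → ℝ) (lamhat : Fin n → Ω → ℝ)
    (huhatortho : ∀ ω k l, ∑ a, uhat k ω a * uhat l ω a = if k = l then 1 else 0)
    (huhateig : ∀ ω k, (Chat ω).mulVec (uhat k ω) = lamhat k ω • uhat k ω)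
    (w : Fin n → Fin n → ℝ) (hwnonneg : ∀ i j, i ≠ j → 0 ≤ w i j)
    (hwzero : ∀ i j, i ≠ j → lam i = lam j → w i j = 0)
    (k : Fin n → ℝ)
    (hk : ∀ j, k j = Real.sqrt
      ((∫ ω, ∑ a, ((vecMulVec (x ⟨0, hm⟩ ω) (x ⟨0, hm⟩ ω)).mulVec (u j) a) ^ 2 ∂μ)
        - lam j ^ 2))
    (t : ℝ) (ht : 0 < t) :
    (μ {ω | (∀ i j, i ≠ j → w i j ≠ 0 →
              Real.sign (lam i - lam j) * (2 * lamhat i ω)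
                > Real.sign (lam i - lam j) * (lam i + lam j))
            ∧ t < ∑ ij ∈ Finset.univ.filter (fun ij : Fin n × Fin n => ij.1 ≠ ij.2),
                w ij.1 ij.2 * (∑ a, uhat ij.1 ω a * u ij.2 a) ^ 2}).toReal
      ≤ ∑ ij ∈ Finset.univ.filter (fun ij : Fin n × Fin n => ij.1 ≠ ij.2),
          4 * w ij.1 ij.2 * k ij.2 ^ 2 / (m * t * (lam ij.1 - lam ij.2) ^ 2) := by
  set S := Finset.univ.filter (fun ij : Fin n × Fin n => ij.1 ≠ ij.2)
  set R : Fin n → Ω → ℝ := fun j ω => ∑ a, (Chat ω *ᵥ u j - lam j • u j) a ^ 2 with hR_def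
  have hR : ∀ j, Integrable (R j) μ ∧ ∫ ω, R j ω ∂μ = (m : ℝ)⁻¹ * k j ^ 2 := by
    intro j
    have hunit : ∑ a, u j a ^ 2 = 1 := by simp only [sq]; exact (huortho j j).trans (if_pos rfl)
    have hvar := sum_variance_vecMulVec_mulVec_apply (hmeas _).aemeasurable hL4 hC (hueig j) hunit
    rw [hk j, ← hvar, Real.sq_sqrt (sum_nonneg fun a _ => variance_nonneg _ _)]
    simp only [hR_def, hChat, ← hueig j]
    exact integral_sum_sq_sampleCov_mulVec_sub ⟨0, hm⟩ hmeas hindep hident hL4 hC (u j)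
  set g : Ω → ℝ := fun ω => ∑ ij ∈ S, 4 * w ij.1 ij.2 / (lam ij.1 - lam ij.2) ^ 2 * R ij.2 ω
  have hsymm : ∀ ω, (Chat ω)ᵀ = Chat ω := fun ω => by
    simp only [hChat, transpose_smul, transpose_sum, transpose_vecMulVec]
  have hg0 : 0 ≤ᵐ[μ] g := ae_of_all _ fun ω => sum_nonneg fun ij hij =>
    mul_nonneg (div_nonneg (mul_nonneg zero_le_four (hwnonneg _ _ (mem_filter.mp hij).2))
      (sq_nonneg _)) (sum_nonneg fun a _ => sq_nonneg _)
  have hgint : Integrable g μ := integrable_finsetSum _ fun ij _ => (hR ij.2).1.const_mul _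
  calc _ ≤ μ.real {ω | t ≤ g ω} := by
        refine measureReal_mono fun ω ⟨hgap, hsum⟩ => hsum.le.trans (sum_le_sum fun ij hij => ?_)
        have hij := (mem_filter.mp hij).2
        exact mul_sq_dotProduct_le_of_sign_mul_lt (hsymm ω)
          ((huhatortho ω _ _).trans (if_pos rfl)) (huhateig ω ij.1) (u ij.2)
          (hwnonneg _ _ hij) (hwzero _ _ hij) (hgap _ _ hij)
    _ ≤ (∫ ω, g ω ∂μ) / t := by
      rw [le_div_iff₀ ht, mul_comm]
      exact mul_meas_ge_le_integral_of_nonneg hg0 hgint t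
    _ = _ := by
      rw [integral_finsetSum _ fun ij _ => (hR ij.2).1.const_mul _, sum_div]
      refine sum_congr rfl fun ij _ => ?_
      rw [integral_const_mul, (hR ij.2).2]
      simp only [div_eq_mul_inv, mul_inv]
      ring

/-- (Corollary 1 of the paper.) In the setting of i.i.d. mean-zero
samples with covariance `C`, sample covariance `Ĉ`, orthonormal eigenpairs `(u, λ)`
of `C` (nonincreasing) and measurable eigenpairs `(û(ω), λ̂(ω))` of `Ĉ(ω)`
(nonincreasing): for nonnegative weights `w i j` (for `i ≠ j`) vanishing whenever
`λ_i = λ_j`, and the event `E` that the sign condition holds for every pair with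
`w i j ≠ 0`, for every `t > 0`:
`P(E ∩ {∑_{i≠j} w i j ⟨û_i, u_j⟩² > t}) ≤ ∑_{i≠j} 4 w i j k_j² / (m t (λ_i - λ_j)²)`. -/
theorem weighted_angle_sum_concentration {Ω : Type*} [MeasurableSpace Ω]
    (μ : Measure Ω) [IsProbabilityMeasure μ]
    {n m : ℕ} (hm : 0 < m)
    (x : Fin m → Ω → Fin n → ℝ)
    (hmeas : ∀ p, Measurable (x p))
    (hindep : iIndepFun x μ)
    (hident : ∀ p, IdentDistrib (x p) (x ⟨0, hm⟩) μ μ)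
    (hmean : ∀ a, ∫ ω, x ⟨0, hm⟩ ω a ∂μ = 0)
    (C : Matrix (Fin n) (Fin n) ℝ)
    (hC : ∀ a b, C a b = ∫ ω, x ⟨0, hm⟩ ω a * x ⟨0, hm⟩ ω b ∂μ)
    (hL4 : Integrable (fun ω => (∑ a, x ⟨0, hm⟩ ω a ^ 2) ^ 2) μ)
    (Chat : Ω → Matrix (Fin n) (Fin n) ℝ)
    (hChat : ∀ ω, Chat ω = (m : ℝ)⁻¹ • ∑ p, vecMulVec (x p ω) (x p ω))
    (u : Fin n → Fin n → ℝ) (lam : Fin n → ℝ) (hlam : Antitone lam)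
    (huortho : ∀ k l, ∑ a, u k a * u l a = if k = l then 1 else 0)
    (hueig : ∀ k, C.mulVec (u k) = lam k • u k)
    (uhat : Fin n → Ω → Fin n → ℝ) (lamhat : Fin n → Ω → ℝ)
    (huhatmeas : ∀ k, Measurable (uhat k))
    (hlamhatmeas : ∀ k, Measurable (lamhat k))
    (huhatortho : ∀ ω k l, ∑ a, uhat k ω a * uhat l ω a = if k = l then 1 else 0)
    (huhateig : ∀ ω k, (Chat ω).mulVec (uhat k ω) = lamhat k ω • uhat k ω)
    (hlamhatmono : ∀ ω, Antitone (fun k => lamhat k ω))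
    (w : Fin n → Fin n → ℝ) (hwnonneg : ∀ i j, i ≠ j → 0 ≤ w i j)
    (hwzero : ∀ i j, i ≠ j → lam i = lam j → w i j = 0)
    (k : Fin n → ℝ)
    (hk : ∀ j, k j = Real.sqrt
      ((∫ ω, ∑ a, ((vecMulVec (x ⟨0, hm⟩ ω) (x ⟨0, hm⟩ ω)).mulVec (u j) a) ^ 2 ∂μ)
        - lam j ^ 2))
    (t : ℝ) (ht : 0 < t) :
    (μ {ω | (∀ i j, i ≠ j → w i j ≠ 0 →
              Real.sign (lam i - lam j) * (2 * lamhat i ω)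
                > Real.sign (lam i - lam j) * (lam i + lam j))
            ∧ t < ∑ ij ∈ Finset.univ.filter (fun ij : Fin n × Fin n => ij.1 ≠ ij.2),
                w ij.1 ij.2 * (∑ a, uhat ij.1 ω a * u ij.2 a) ^ 2}).toReal
      ≤ ∑ ij ∈ Finset.univ.filter (fun ij : Fin n × Fin n => ij.1 ≠ ij.2),
          4 * w ij.1 ij.2 * k ij.2 ^ 2 / (m * t * (lam ij.1 - lam ij.2) ^ 2) :=
  weighted_angle_sum_concentration_general μ hm x hmeas hindep hident C hC hL4 Chat hChat u lam
    huortho hueig uhat lamhat huhatortho huhateig w hwnonneg hwzero k hk t ht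
end

section
/- Let x_1,…,x_m be vectors in ℝ^n, let Ĉ = (1/m) Σ_{p=1}^m x_p x_p^T, and let C be a symmetric n×n matrix. Let u_j be a unit eigenvector of C with eigenvalue λ_j ≥ 0, let λ_i be another eigenvalue of C with λ_i ≠ λ_j, and let û_i be a unit eigenvector of Ĉ with eigenvalue λ̂_i satisfying sign(λ_i − λ_j)·2λ̂_i > sign(λ_i − λ_j)·(λ_i + λ_j). Then |⟨û_i, u_j⟩| ≤ (2 / (m·|λ_i − λ_j|)) · Σ_{p=1}^m ( ⟨u_j, x_p⟩²·(‖x_p‖₂² − λ_j) + λ_j² )^{1/2}. -/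
open Matrix Finset

/-!
Pair the eigen-equation `Ĉ û = λ̂ û` with `u_j`: since `Ĉ - λ_j` is the average of the rank-one
deviations `x_p x_pᵀ - λ_j`, this gives
`(λ̂ - λ_j) ⟨û, u_j⟩ = (1/m) ∑ₚ ⟨û, ⟨u_j, x_p⟩ x_p - λ_j u_j⟩`.
By Cauchy–Schwarz each term is at most `‖⟨u_j, x_p⟩ x_p - λ_j u_j‖`, whose square is
`⟨u_j, x_p⟩² (‖x_p‖² - 2λ_j) + λ_j² ≤ ⟨u_j, x_p⟩² (‖x_p‖² - λ_j) + λ_j²`.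
Finally, the sign condition says that `λ̂` lies on the side of the midpoint `(λ_i + λ_j)/2`
away from `λ_j`, so `|λ̂ - λ_j| > |λ_i - λ_j| / 2`.
-/

noncomputable def sampleCov {ι : Type*} {m : ℕ} (x : Fin m → ι → ℝ) : Matrix ι ι ℝ :=
  (m : ℝ)⁻¹ • ∑ p, vecMulVec (x p) (x p)

section

variable {ι : Type*} [Fintype ι]

lemma abs_dotProduct_le_sqrt_of_dotProduct_self_eq_one {u : ι → ℝ} (hu : u ⬝ᵥ u = 1)
    (w : ι → ℝ) : |u ⬝ᵥ w| ≤ √(w ⬝ᵥ w) := by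
  rw [← Real.sqrt_sq_eq_abs]
  refine Real.sqrt_le_sqrt ?_
  have h := Finset.sum_mul_sq_le_sq_mul_sq univ u w
  simp only [← sq, dotProduct] at hu h ⊢
  simpa [hu] using h

lemma abs_dotProduct_smul_sub_smul_le_sqrt {v u : ι → ℝ} (hv : v ⬝ᵥ v = 1) (hu : u ⬝ᵥ u = 1)
    {c : ℝ} (hc : 0 ≤ c) (x : ι → ℝ) :
    |v ⬝ᵥ ((u ⬝ᵥ x) • x - c • u)| ≤ √((u ⬝ᵥ x) ^ 2 * (x ⬝ᵥ x - c) + c ^ 2) := by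
  have hnorm : ((u ⬝ᵥ x) • x - c • u) ⬝ᵥ ((u ⬝ᵥ x) • x - c • u)
      = (u ⬝ᵥ x) ^ 2 * (x ⬝ᵥ x - 2 * c) + c ^ 2 := by
    simp only [dotProduct_sub, sub_dotProduct, dotProduct_smul, smul_dotProduct, smul_eq_mul,
      dotProduct_comm x u, hu]
    ring
  refine (abs_dotProduct_le_sqrt_of_dotProduct_self_eq_one hv _).trans (Real.sqrt_le_sqrt ?_)
  rw [hnorm]
  nlinarith [mul_nonneg hc (sq_nonneg (u ⬝ᵥ x))]

lemma sampleCov_mulVec {m : ℕ} (x : Fin m → ι → ℝ) (w : ι → ℝ) :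
    sampleCov x *ᵥ w = (m : ℝ)⁻¹ • ∑ p, (x p ⬝ᵥ w) • x p := by
  simp [sampleCov, smul_mulVec, sum_mulVec, vecMulVec_mulVec]

lemma sub_mul_dotProduct_eq_of_sampleCov_mulVec {m : ℕ} (hm : m ≠ 0) {x : Fin m → ι → ℝ}
    {w : ι → ℝ} {μ : ℝ} (hw : sampleCov x *ᵥ w = μ • w) (u : ι → ℝ) (c : ℝ) :
    (μ - c) * (w ⬝ᵥ u) = (m : ℝ)⁻¹ * ∑ p, w ⬝ᵥ ((u ⬝ᵥ x p) • x p - c • u) := by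
  have hμ : μ * (w ⬝ᵥ u) = (m : ℝ)⁻¹ * ∑ p, (x p ⬝ᵥ w) * (x p ⬝ᵥ u) := by
    rw [← smul_eq_mul, ← smul_dotProduct, ← hw, sampleCov_mulVec, smul_dotProduct,
      sum_dotProduct]
    simp only [smul_dotProduct, smul_eq_mul]
  simp only [dotProduct_sub, dotProduct_smul, smul_eq_mul, sum_sub_distrib, sum_const,
    card_univ, Fintype.card_fin, nsmul_eq_mul, mul_sub, sub_mul, hμ]
  field_simp
  simp only [dotProduct_comm (x _), mul_comm]

end

lemma abs_sub_lt_two_mul_abs_sub_of_sign_mul_lt {a b c : ℝ}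
    (h : Real.sign (a - b) * (a + b) < Real.sign (a - b) * (2 * c)) :
    0 < |a - b| ∧ |a - b| < 2 * |c - b| := by
  rcases lt_trichotomy (a - b) 0 with hab | hab | hab
  · rw [Real.sign_of_neg hab] at h
    constructor <;> cases abs_cases (a - b) <;> cases abs_cases (c - b) <;> linarith
  · simp [hab] at h
  · rw [Real.sign_of_pos hab] at h
    constructor <;> cases abs_cases (a - b) <;> cases abs_cases (c - b) <;> linarith

theorem sample_cov_angle_deterministic_bound_general {n m : ℕ} (hm : 0 < m)
    (x : Fin m → Fin n → ℝ)
    (Chat : Matrix (Fin n) (Fin n) ℝ)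
    (hChat : Chat = (m : ℝ)⁻¹ • ∑ p, vecMulVec (x p) (x p))
    (uj : Fin n → ℝ) (lamj : ℝ) (hlamj : 0 ≤ lamj)
    (huj : ∑ a, uj a ^ 2 = 1)
    (lami : ℝ)
    (uhati : Fin n → ℝ) (lamhati : ℝ)
    (huhati : ∑ a, uhati a ^ 2 = 1)
    (hChatuhati : Chat.mulVec uhati = lamhati • uhati)
    (hcond : Real.sign (lami - lamj) * (2 * lamhati)
      > Real.sign (lami - lamj) * (lami + lamj)) :
    |∑ a, uhati a * uj a|
      ≤ 2 / (m * |lami - lamj|)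
        * ∑ p, Real.sqrt ((∑ a, uj a * x p a) ^ 2 * ((∑ a, x p a ^ 2) - lamj)
            + lamj ^ 2) := by
  have hsq (v : Fin n → ℝ) : ∑ a, v a ^ 2 = v ⬝ᵥ v := by simp only [sq, dotProduct]
  simp only [hsq] at huj huhati ⊢
  change |uhati ⬝ᵥ uj| ≤ _ * ∑ p, √((uj ⬝ᵥ x p) ^ 2 * (x p ⬝ᵥ x p - lamj) + lamj ^ 2)
  set A := ∑ p, √((uj ⬝ᵥ x p) ^ 2 * (x p ⬝ᵥ x p - lamj) + lamj ^ 2)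
  obtain ⟨hgap_pos, hgap⟩ := abs_sub_lt_two_mul_abs_sub_of_sign_mul_lt hcond
  have hkey := sub_mul_dotProduct_eq_of_sampleCov_mulVec hm.ne' (hChat ▸ hChatuhati) uj lamj
  have hbound : |lamhati - lamj| * |uhati ⬝ᵥ uj| ≤ (m : ℝ)⁻¹ * A := by
    rw [← abs_mul, hkey, abs_mul, abs_inv, Nat.abs_cast]
    gcongr
    exact (abs_sum_le_sum_abs _ _).trans
      (sum_le_sum fun p _ => abs_dotProduct_smul_sub_smul_le_sqrt huhati huj hlamj (x p))
  have hm_pos : (0 : ℝ) < m := Nat.cast_pos.mpr hm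
  rw [div_mul_eq_mul_div, le_div_iff₀ (by positivity)]
  calc |uhati ⬝ᵥ uj| * (m * |lami - lamj|)
      ≤ |uhati ⬝ᵥ uj| * (m * (2 * |lamhati - lamj|)) := by gcongr
    _ = 2 * m * (|lamhati - lamj| * |uhati ⬝ᵥ uj|) := by ring
    _ ≤ 2 * m * ((m : ℝ)⁻¹ * A) := by gcongr
    _ = 2 * A := by field_simp

/-- Deterministic bound on `|⟨û_i, u_j⟩|` for the sample covariance
`Ĉ = (1/m) ∑ₚ x_p x_pᵀ` of vectors `x_1, …, x_m` in `ℝ^n` and a symmetric matrix `C`: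
if `u_j` is a unit eigenvector of `C` with eigenvalue `λ_j ≥ 0`, `λ_i ≠ λ_j` is another
eigenvalue of `C`, and `û_i` is a unit eigenvector of `Ĉ` with eigenvalue `λ̂_i`
satisfying the sign condition, then
`|⟨û_i, u_j⟩| ≤ (2 / (m |λ_i - λ_j|)) ∑ₚ √(⟨u_j, x_p⟩² (‖x_p‖₂² - λ_j) + λ_j²)`. -/
theorem sample_cov_angle_deterministic_bound {n m : ℕ} (hm : 0 < m)
    (x : Fin m → Fin n → ℝ)
    (Chat : Matrix (Fin n) (Fin n) ℝ)
    (hChat : Chat = (m : ℝ)⁻¹ • ∑ p, vecMulVec (x p) (x p))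
    (C : Matrix (Fin n) (Fin n) ℝ) (hCsymm : C.IsSymm)
    (uj : Fin n → ℝ) (lamj : ℝ) (hlamj : 0 ≤ lamj)
    (huj : ∑ a, uj a ^ 2 = 1) (hCuj : C.mulVec uj = lamj • uj)
    (lami : ℝ) (v : Fin n → ℝ) (hv : v ≠ 0) (hCv : C.mulVec v = lami • v)
    (hne : lami ≠ lamj)
    (uhati : Fin n → ℝ) (lamhati : ℝ)
    (huhati : ∑ a, uhati a ^ 2 = 1)
    (hChatuhati : Chat.mulVec uhati = lamhati • uhati)
    (hcond : Real.sign (lami - lamj) * (2 * lamhati)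
      > Real.sign (lami - lamj) * (lami + lamj)) :
    |∑ a, uhati a * uj a|
      ≤ 2 / (m * |lami - lamj|)
        * ∑ p, Real.sqrt ((∑ a, uj a * x p a) ^ 2 * ((∑ a, x p a ^ 2) - lamj)
            + lamj ^ 2) :=
  sample_cov_angle_deterministic_bound_general hm x Chat hChat uj lamj hlamj huj lami uhati lamhati
    huhati hChatuhati hcond
end
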